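/- Let X be a Type I ω₁-compact space and D ⊆ X a closed unbounded subset. Then D ∩ Sk(X) is a direction in X if and only if D is a direction in X, where Sk(X) = ⋃_{α<ω₁} B_α(X) is the skeleton of X. -/

import Mathlib

open Set Topology

noncomputable section

universe u

/-- The ordinal ω₁. -/
def omega1 : Ordinal.{0} := (Cardinal.aleph 1).ord

theorem omega1_pos : (0 : Ordinal.{0}) < omega1 := by
  have := Cardinal.ord_lt_ord.mpr (Cardinal.aleph_pos 1)
  simpa [omega1, Cardinal.ord_zero] using this

theorem omega1_isLimit : Order.IsSuccLimit omega1 :=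
  Cardinal.isSuccLimit_ord (Cardinal.aleph0_le_aleph 1)

/-- ω₁ as a type (the set of countable ordinals). -/
def W : Type 1 := {a : Ordinal.{0} // a < omega1}

instance : LinearOrder W := by unfold W; infer_instance
instance : TopologicalSpace W := Preorder.topology W
instance : OrderTopology W := ⟨rfl⟩

def w0 : W := ⟨0, omega1_pos⟩
def Wsucc (a : W) : W := ⟨Order.succ a.1, omega1_isLimit.succ_lt a.2⟩

/-- The closed long ray: ω₁ × [0,1) with the lexicographic order topology. -/
def LongRay : Type 1 := W ×ₗ ↥(Set.Ico (0:ℝ) 1)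

instance : LinearOrder LongRay := by unfold LongRay; infer_instance
instance : TopologicalSpace LongRay := Preorder.topology LongRay
instance : OrderTopology LongRay := ⟨rfl⟩

/-- Embedding of ω₁ into the long ray as the points (α, 0). -/
def iW (a : W) : LongRay := toLex (a, ⟨0, le_rfl, one_pos⟩)
def lrZero : LongRay := iW w0

/-- A subset of ω₁ is unbounded. -/
def WUnbounded (S : Set W) : Prop := ∀ a : W, ∃ b ∈ S, a < b
/-- A subset of ω₁ is closed (in the order sense). -/
def WClosed (S : Set W) : Prop :=
  ∀ a : W, (∃ b, b < a) → (∀ b, b < a → ∃ c ∈ S, b < c ∧ c < a) → a ∈ S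
def WClub (S : Set W) : Prop := WClosed S ∧ WUnbounded S
def WStationary (A : Set W) : Prop := ∀ C : Set W, WClub C → (A ∩ C).Nonempty

/-- A Type I space structure on `X`. -/
structure TypeI (X : Type u) [TopologicalSpace X] where
  seq : W → Set X
  isOpen : ∀ a, IsOpen (seq a)
  lindelof : ∀ a, IsLindelof (closure (seq a))
  mono : ∀ a b : W, a < b → closure (seq a) ⊆ seq b
  covers : ∀ x : X, ∃ a, x ∈ seq a

variable {X : Type u} [TopologicalSpace X]

/-- A subset is bounded if contained in some `X_α`. -/
def TypeI.Bdd (hT : TypeI X) (A : Set X) : Prop := ∃ a, A ⊆ hT.seq a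
/-- Club: closed and unbounded. -/
def TypeI.Club (hT : TypeI X) (A : Set X) : Prop := IsClosed A ∧ ¬ hT.Bdd A
/-- A predirection: an unbounded set such that any function unbounded on it is
unbounded on every unbounded subset of it. -/
def TypeI.Predirection (hT : TypeI X) (D : Set X) : Prop :=
  ¬ hT.Bdd D ∧ ∀ f : X → LongRay, Continuous f → ¬ BddAbove (f '' D) →
    ∀ A ⊆ D, ¬ hT.Bdd A → ¬ BddAbove (f '' A)
/-- A direction: a closed predirection. -/
def TypeI.IsDirection (hT : TypeI X) (D : Set X) : Prop := IsClosed D ∧ hT.Predirection D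
/-- The bones. -/
def TypeI.bone (hT : TypeI X) (a : W) : Set X := closure (hT.seq a) \ hT.seq a
/-- The sequence is canonical. -/
def TypeI.Canonical (hT : TypeI X) : Prop :=
  ∀ a : W, Order.IsSuccLimit a.1 → hT.seq a = ⋃ b ∈ {b : W | b < a}, hT.seq b
/-- A slicer. -/
def TypeI.Slicer (hT : TypeI X) (s : X → LongRay) : Prop :=
  Continuous s ∧ ∀ a : W, ∀ x ∈ closure (hT.seq (Wsucc a)) \ hT.seq a,
    s x ∈ Set.Icc (iW a) (iW (Wsucc a))

/-- ω-bounded: closures of countable sets are compact. -/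
def OmegaBounded (X : Type u) [TopologicalSpace X] : Prop :=
  ∀ S : Set X, S.Countable → IsCompact (closure S)
/-- ω₁-compact: no uncountable closed discrete subset. -/
def Omega1Compact (X : Type u) [TopologicalSpace X] : Prop :=
  ∀ C : Set X, IsClosed C → DiscreteTopology C → C.Countable
/-- Countably tight. -/
def CountablyTight (X : Type u) [TopologicalSpace X] : Prop :=
  ∀ (A : Set X) (x : X), x ∈ closure A → ∃ B ⊆ A, B.Countable ∧ x ∈ closure B


/-! ### Auxiliary lemmas -/

theorem W_lt_iff {a b : W} : a < b ↔ a.1 < b.1 := Iff.rfl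
theorem W_le_iff {a b : W} : a ≤ b ↔ a.1 ≤ b.1 := Iff.rfl
theorem w0_le (a : W) : w0 ≤ a := W_le_iff.mpr zero_le
theorem lt_Wsucc (a : W) : a < Wsucc a := W_lt_iff.mpr (Order.lt_succ a.1)
theorem Wsucc_le_iff {a b : W} : Wsucc a ≤ b ↔ a < b := by
  rw [W_le_iff, W_lt_iff]; exact Order.succ_le_iff
theorem lt_Wsucc_iff {a b : W} : b < Wsucc a ↔ b ≤ a := by
  rw [W_le_iff, W_lt_iff]; exact Order.lt_succ_iff
theorem W_wf : WellFounded ((· < ·) : W → W → Prop) := (Subtype.wellFoundedLT _).wf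

theorem W_countable_bounded {S : Set W} (hS : S.Countable) : ∃ b : W, ∀ a ∈ S, a < b := by
  rcases S.eq_empty_or_nonempty with rfl | hne
  · exact ⟨w0, by simp⟩
  obtain ⟨g, hg⟩ := hS.exists_eq_range hne
  have hlt : ∀ n, Order.succ (g n).1 < omega1 := fun n => omega1_isLimit.succ_lt (g n).2
  have hsup : (⨆ n, Order.succ (g n).1) < omega1 := by
    apply Ordinal.iSup_lt_ord _ hlt
    rw [Cardinal.mk_nat]; unfold omega1; rw [Cardinal.isRegular_aleph_one.cof_eq]
    exact Cardinal.aleph0_lt_aleph_one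
  refine ⟨⟨_, hsup⟩, fun a ha => ?_⟩
  rw [hg] at ha; obtain ⟨n, rfl⟩ := ha
  exact W_lt_iff.mpr ((Order.lt_succ _).trans_le (le_ciSup (Ordinal.bddAbove_range _) n))

theorem iW_lt_iW {a b : W} (h : a < b) : iW a < iW b := by
  apply Prod.Lex.lt_iff.mpr; exact Or.inl h

theorem exists_iW_gt (t : LongRay) : ∃ a : W, t < iW a := by
  refine ⟨Wsucc (ofLex t).1, ?_⟩
  have : toLex (ofLex t) < iW (Wsucc (ofLex t).1) :=
    Prod.Lex.lt_iff.mpr (Or.inl (lt_Wsucc _))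
  exact this

namespace TypeI

variable {X : Type u} [TopologicalSpace X]

theorem seq_mono_le (hT : TypeI X) {a b : W} (h : a ≤ b) : hT.seq a ⊆ hT.seq b := by
  rcases h.lt_or_eq with h | rfl
  · exact subset_closure.trans (hT.mono _ _ h)
  · exact subset_rfl

theorem closure_seq_mono_le (hT : TypeI X) {a b : W} (h : a ≤ b) :
    closure (hT.seq a) ⊆ closure (hT.seq b) := closure_mono (hT.seq_mono_le h)

/-- The least level containing `x`. -/
noncomputable def rho (hT : TypeI X) (x : X) : W :=
  W_wf.min {a : W | x ∈ hT.seq a} (hT.covers x)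

theorem rho_mem (hT : TypeI X) (x : X) : x ∈ hT.seq (hT.rho x) :=
  W_wf.min_mem {a : W | x ∈ hT.seq a} (hT.covers x)

theorem rho_not_mem (hT : TypeI X) {x : X} {b : W} (h : b < hT.rho x) : x ∉ hT.seq b :=
  fun hb => W_wf.not_lt_min {a : W | x ∈ hT.seq a} hb h

theorem lt_rho (hT : TypeI X) {x : X} {a : W} (h : x ∉ hT.seq a) : a < hT.rho x := by
  by_contra hc
  exact h (hT.seq_mono_le (not_lt.mp hc) (hT.rho_mem x))

theorem rho_cases (hT : TypeI X) (hcan : hT.Canonical) (x : X) :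
    hT.rho x = w0 ∨ ∃ s : W, hT.rho x = Wsucc s := by
  rcases Ordinal.zero_or_succ_or_isSuccLimit (hT.rho x).1 with h | ⟨s, hs⟩ | h
  · exact Or.inl (Subtype.ext h)
  · have hsw : s < omega1 := lt_of_le_of_lt (by rw [← hs] at *; exact (Order.le_succ s)) ((hT.rho x).2)
    have hslt : s < (hT.rho x).1 := by rw [← hs]; exact Order.lt_succ s
    exact Or.inr ⟨⟨s, hsw⟩, Subtype.ext hs.symm⟩
  · exfalso
    have := hT.rho_mem x
    rw [hcan _ h] at this
    simp only [Set.mem_iUnion] at this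
    obtain ⟨b, hb, hxb⟩ := this
    exact hT.rho_not_mem hb hxb

/-- The neighbourhood isolating the level of `x`, given that `D` avoids all bones. -/
theorem level_nbhd (hT : TypeI X) (hcan : hT.Canonical) {D : Set X}
    (havoid : ∀ b : W, D ∩ closure (hT.seq b) ⊆ hT.seq b) {x : X} (hx : x ∈ D) :
    ∃ U : Set X, IsOpen U ∧ x ∈ U ∧ ∀ y ∈ D, y ∈ U → hT.rho y = hT.rho x := by
  rcases hT.rho_cases hcan x with h0 | ⟨s, hs⟩
  · refine ⟨hT.seq w0, hT.isOpen w0, ?_, fun y _ hyU => ?_⟩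
    · rw [← h0]; exact hT.rho_mem x
    · rw [h0]
      by_contra hne
      have : w0 < hT.rho y := (w0_le _).lt_of_ne (Ne.symm hne)
      exact hT.rho_not_mem this hyU
  · have hxs : x ∉ hT.seq s := hT.rho_not_mem (by rw [hs]; exact lt_Wsucc s)
    have hxcl : x ∉ closure (hT.seq s) := fun h => hxs (havoid s ⟨hx, h⟩)
    refine ⟨hT.seq (Wsucc s) \ closure (hT.seq s),
      (hT.isOpen _).sdiff isClosed_closure, ⟨by rw [← hs]; exact hT.rho_mem x, hxcl⟩,
      fun y hyD hyU => ?_⟩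
    rw [hs]
    have h1 : hT.rho y ≤ Wsucc s := by
      by_contra hc
      exact hT.rho_not_mem (not_le.mp hc) hyU.1
    have h2 : s < hT.rho y := by
      by_contra hc
      exact hyU.2 (subset_closure (hT.seq_mono_le (not_lt.mp hc) (hT.rho_mem y)))
    exact le_antisymm h1 (Wsucc_le_iff.mpr h2)

theorem bdd_mono (hT : TypeI X) {A B : Set X} (h : A ⊆ B) (hB : hT.Bdd B) : hT.Bdd A := by
  obtain ⟨a, ha⟩ := hB; exact ⟨a, h.trans ha⟩

/-- The key lemma: in an ω₁-compact Type I space, every club meets the skeleton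
unboundedly. -/
theorem key_unbdd [T2Space X] (hT : TypeI X) (hcan : hT.Canonical) (h1 : Omega1Compact X)
    {D : Set X} (hDc : IsClosed D) (hDu : ¬ hT.Bdd D) :
    ¬ hT.Bdd (D ∩ ⋃ a : W, hT.bone a) := by
  rintro ⟨a₀, hsub⟩
  set D' : Set X := D \ hT.seq (Wsucc a₀) with hD'
  have hD'c : IsClosed D' := hDc.sdiff (hT.isOpen _)
  have hD'u : ¬ hT.Bdd D' := by
    rintro ⟨c, hc⟩
    refine hDu ⟨max c (Wsucc a₀), fun x hx => ?_⟩
    by_cases hxs : x ∈ hT.seq (Wsucc a₀)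
    · exact hT.seq_mono_le (le_max_right _ _) hxs
    · exact hT.seq_mono_le (le_max_left _ _) (hc ⟨hx, hxs⟩)
  have havoid : ∀ b : W, D' ∩ closure (hT.seq b) ⊆ hT.seq b := by
    intro b x hx
    rcases le_or_gt b a₀ with hb | hb
    · exfalso
      exact hx.1.2 (hT.mono b (Wsucc a₀) (lt_Wsucc_iff.mpr hb) hx.2)
    · by_contra hxb
      have : x ∈ D ∩ ⋃ a : W, hT.bone a :=
        ⟨hx.1.1, Set.mem_iUnion.mpr ⟨b, hx.2, hxb⟩⟩
      exact hxb (hT.mono a₀ b hb (subset_closure (hsub this)))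
  -- pick one point of D' in each occupied level
  set T : Set W := {a : W | ∃ x, x ∈ D' ∧ hT.rho x = a} with hTdef
  have hne : D'.Nonempty := by
    rcases D'.eq_empty_or_nonempty with h | h
    · exact absurd ⟨w0, by rw [h]; exact Set.empty_subset _⟩ hD'u
    · exact h
  have pick : ∀ a : W, ∃ x : X, a ∈ T → x ∈ D' ∧ hT.rho x = a := by
    intro a
    by_cases ha : a ∈ T
    · obtain ⟨x, hx⟩ := ha; exact ⟨x, fun _ => hx⟩
    · exact ⟨hne.choose, fun h => absurd h ha⟩
  choose p hp using pick
  set E : Set X := p '' T with hEdef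
  have hpT : ∀ a ∈ T, p a ∈ D' ∧ hT.rho (p a) = a := fun a ha => hp a ha
  have hEsub : E ⊆ D' := by rintro _ ⟨a, ha, rfl⟩; exact (hpT a ha).1
  have hEU : ∀ x ∈ E, ∃ U : Set X, IsOpen U ∧ x ∈ U ∧ E ∩ U ⊆ {x} := by
    rintro x hxE
    obtain ⟨a, haT, rfl⟩ := hxE
    obtain ⟨hpD, hpa⟩ := hpT a haT
    obtain ⟨U, hUo, hxU, hU⟩ := hT.level_nbhd hcan havoid hpD
    refine ⟨U, hUo, hxU, ?_⟩
    rintro z ⟨⟨b, hbT, rfl⟩, hzU⟩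
    obtain ⟨hzD, hzb⟩ := hpT b hbT
    have : b = a := by rw [← hzb, hU _ hzD hzU, hpa]
    simp [this]
  have hEclosed : IsClosed E := by
    rw [← closure_subset_iff_isClosed]
    intro y hy
    have hyD : y ∈ D' := hD'c.closure_subset ((closure_mono hEsub) hy)
    obtain ⟨U, hUo, hyU, hU⟩ := hT.level_nbhd hcan havoid hyD
    have hyc : y ∈ closure (E ∩ U) := by
      have := (hUo.inter_closure (t := E)) ⟨hyU, hy⟩
      rwa [Set.inter_comm] at this
    have hTy : hT.rho y ∈ T := ⟨y, hyD, rfl⟩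
    have hsub2 : E ∩ U ⊆ {p (hT.rho y)} := by
      rintro z ⟨⟨b, hbT, rfl⟩, hzU⟩
      obtain ⟨hzD, hzb⟩ := hpT b hbT
      have : b = hT.rho y := by rw [← hzb, hU _ hzD hzU]
      simp [this]
    have := (closure_mono hsub2) hyc
    rw [closure_singleton] at this
    rw [this]
    exact ⟨hT.rho y, hTy, rfl⟩
  have hEdisc : DiscreteTopology E := by
    rw [discreteTopology_subtype_iff]
    intro x hxE
    obtain ⟨U, hUo, hxU, hU⟩ := hEU x hxE
    rw [Filter.inf_principal_eq_bot]
    rw [mem_nhdsWithin]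
    refine ⟨U, hUo, hxU, ?_⟩
    rintro z ⟨hzU, hzx⟩ hzE
    exact hzx (hU ⟨hzE, hzU⟩)
  have hEcount : E.Countable := h1 E hEclosed hEdisc
  have hTcount : T.Countable := by
    have : T ⊆ hT.rho '' E := by
      rintro a haT
      exact ⟨p a, ⟨a, haT, rfl⟩, (hpT a haT).2⟩
    exact (hEcount.image hT.rho).mono this
  obtain ⟨b, hb⟩ := W_countable_bounded hTcount
  have : ∃ x ∈ D', x ∉ hT.seq b := by
    by_contra hc
    push_neg at hc
    exact hD'u ⟨b, hc⟩
  obtain ⟨x, hxD, hxb⟩ := this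
  have h1' : b < hT.rho x := hT.lt_rho hxb
  have h2' : hT.rho x < b := hb _ ⟨x, hxD, rfl⟩
  exact absurd (h1'.trans h2') (lt_irrefl b)

/-- The skeleton is closed. -/
theorem sk_closed (hT : TypeI X) (hcan : hT.Canonical) : IsClosed (⋃ a : W, hT.bone a) := by
  rw [← isOpen_compl_iff]
  rw [isOpen_iff_forall_mem_open]
  intro x hx
  have hxSk : ∀ b : W, x ∉ hT.bone b := by
    intro b hb; exact hx (Set.mem_iUnion.mpr ⟨b, hb⟩)
  rcases hT.rho_cases hcan x with h0 | ⟨s, hs⟩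
  · refine ⟨hT.seq w0, ?_, hT.isOpen w0, by rw [← h0]; exact hT.rho_mem x⟩
    intro z hz hzSk
    obtain ⟨b, hzb⟩ := Set.mem_iUnion.mp hzSk
    exact hzb.2 (hT.seq_mono_le (w0_le b) hz)
  · have hxs : x ∉ hT.seq s := hT.rho_not_mem (by rw [hs]; exact lt_Wsucc s)
    have hxcl : x ∉ closure (hT.seq s) := by
      intro h
      exact hxSk s ⟨h, hxs⟩
    refine ⟨hT.seq (Wsucc s) \ closure (hT.seq s), ?_,
      (hT.isOpen _).sdiff isClosed_closure, by rw [← hs]; exact hT.rho_mem x, hxcl⟩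
    rintro z ⟨hz1, hz2⟩ hzSk
    obtain ⟨b, hzb⟩ := Set.mem_iUnion.mp hzSk
    rcases le_or_gt b s with hb | hb
    · exact hz2 (hT.closure_seq_mono_le hb hzb.1)
    · exact hzb.2 (hT.seq_mono_le (Wsucc_le_iff.mpr hb) hz1)

/-- Continuous images of Lindelöf sets are bounded in the long ray. -/
theorem bddAbove_of_lindelof {K : Set X} (hK : IsLindelof K) {f : X → LongRay}
    (hf : Continuous f) : BddAbove (f '' K) := by
  have himg : IsLindelof (f '' K) := hK.image hf
  have hcov : f '' K ⊆ ⋃ a : W, Iio (iW a) := by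
    intro t _
    obtain ⟨a, ha⟩ := exists_iW_gt t
    exact Set.mem_iUnion.mpr ⟨a, ha⟩
  obtain ⟨r, hrc, hr⟩ := himg.elim_countable_subcover (fun a : W => Iio (iW a))
    (fun _ => isOpen_Iio) hcov
  obtain ⟨b, hb⟩ := W_countable_bounded hrc
  refine ⟨iW b, fun t ht => ?_⟩
  obtain ⟨a, ha, hta⟩ := Set.mem_iUnion₂.mp (hr ht)
  exact le_of_lt (lt_trans hta (iW_lt_iW (hb a ha)))

theorem bddAbove_image_closure {A : Set X} {f : X → LongRay} (hf : Continuous f)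
    (h : BddAbove (f '' A)) : BddAbove (f '' closure A) := by
  obtain ⟨b, hb⟩ := h
  refine ⟨b, ?_⟩
  rintro y ⟨x, hx, rfl⟩
  have hsub : closure A ⊆ f ⁻¹' Iic b :=
    closure_minimal (fun z hz => hb ⟨z, hz, rfl⟩) (isClosed_Iic.preimage hf)
  exact hsub hx

/-- If `f` is bounded on `D ∩ Sk`, it is bounded on `D`. -/
theorem bdd_transfer [T2Space X] (hT : TypeI X) (hcan : hT.Canonical)
    (h1 : Omega1Compact X) {D : Set X} (hD : hT.Club D) {f : X → LongRay}
    (hf : Continuous f) (hb : BddAbove (f '' (D ∩ ⋃ a : W, hT.bone a))) :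
    BddAbove (f '' D) := by
  obtain ⟨b, hb⟩ := hb
  obtain ⟨b', hbb'⟩ := exists_iW_gt b
  set E : Set X := D ∩ f ⁻¹' (Ici (iW b')) with hEdef
  have hEc : IsClosed E := hD.1.inter ((isClosed_Ici).preimage hf)
  have hESk : E ∩ ⋃ a : W, hT.bone a = ∅ := by
    rw [Set.eq_empty_iff_forall_notMem]
    rintro x ⟨⟨hxD, hxf⟩, hxSk⟩
    have h1' : f x ≤ b := hb ⟨x, ⟨hxD, hxSk⟩, rfl⟩
    exact absurd (lt_of_lt_of_le hbb' hxf) (not_lt.mpr h1')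
  have hEbdd : hT.Bdd E := by
    by_contra hEu
    apply hT.key_unbdd hcan h1 hEc hEu
    rw [hESk]
    exact ⟨w0, Set.empty_subset _⟩
  obtain ⟨a, hEa⟩ := hEbdd
  obtain ⟨c, hc⟩ := TypeI.bddAbove_of_lindelof (hT.lindelof a) hf
  refine ⟨max (iW b') c, ?_⟩
  rintro y ⟨x, hxD, rfl⟩
  by_cases hxa : x ∈ hT.seq a
  · exact le_trans (hc ⟨x, subset_closure hxa, rfl⟩) (le_max_right _ _)
  · have hxE : x ∉ E := fun h => hxa (hEa h)
    have : f x ∉ Ici (iW b') := fun h => hxE ⟨hxD, h⟩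
    exact le_trans (le_of_lt (not_le.mp this)) (le_max_left _ _)

end TypeI

/-- In an ω₁-compact Type I space, D ∩ Sk(X) is a direction iff D is. -/
theorem stmt_18 {X : Type u} [TopologicalSpace X] [T2Space X] (hT : TypeI X)
    (hcan : hT.Canonical) (h1 : Omega1Compact X) (D : Set X) (hD : hT.Club D) :
    hT.IsDirection (D ∩ ⋃ a : W, hT.bone a) ↔ hT.IsDirection D := by
  constructor
  · rintro ⟨hclosed, hunb, hdir⟩
    refine ⟨hD.1, hD.2, ?_⟩
    intro f hf hunbD A hA hAunb
    have h2 : ¬ BddAbove (f '' (D ∩ ⋃ a : W, hT.bone a)) := fun hb =>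
      hunbD (hT.bdd_transfer hcan h1 hD hf hb)
    have hA' : closure A ⊆ D := closure_minimal hA hD.1
    have hA'unb : ¬ hT.Bdd (closure A) := fun h =>
      hAunb (hT.bdd_mono subset_closure h)
    have hkey : ¬ hT.Bdd (closure A ∩ ⋃ a : W, hT.bone a) :=
      hT.key_unbdd hcan h1 isClosed_closure hA'unb
    have hsubset : closure A ∩ (⋃ a : W, hT.bone a) ⊆ D ∩ ⋃ a : W, hT.bone a :=
      inter_subset_inter_left _ hA'
    have hres := hdir f hf h2 _ hsubset hkey
    intro hbA
    exact hres ((TypeI.bddAbove_image_closure hf hbA).mono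
      (image_mono (f := f) inter_subset_left))
  · rintro ⟨hclosed, hunb, hdir⟩
    refine ⟨hD.1.inter (hT.sk_closed hcan), hT.key_unbdd hcan h1 hD.1 hD.2, ?_⟩
    intro f hf hunbDSk A hA hAunb
    have hD' : ¬ BddAbove (f '' D) := fun hb =>
      hunbDSk (hb.mono (image_mono (f := f) inter_subset_left))
    exact hdir f hf hD' A (hA.trans inter_subset_left) hAunb

end
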